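/- arXiv:0806.3944 — 2 statements merged into one kernel-verified Lean document; each statement's English description precedes it below -/
import Mathlib

section
/- Let n_k = p_1 p_2 ⋯ p_k be the product of the first k primes, and ρ(n) = |X'_n|/φ(n) the proportion of primitive Dirichlet characters mod n. For every fixed k > 1 and every n ≥ 2n_k with n ≢ 2 (mod 4) and ω(n) = k (ω counting distinct prime divisors), one has ρ(2n_k)·log log(2n_k) ≤ ρ(n)·log log n. -/
/-!
Sorting the characters mod `n` by conductor gives `φ(n) = ∑_{d ∣ n} |X'_d|`, so by Möbius
inversion `ρ` is multiplicative, with `ρ(p) = 1 - 1/(p-1)` and `ρ(p^a) = 1 - 1/p` for `a ≥ 2`.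
When `n % 4 ≠ 2` the local factor of `ρ(n)` at `p` is therefore at least `minLocalRho p`, which
increases with `p`; as the `i`-th smallest prime factor of `n` is at least `p_i`, this gives
`ρ(n) ≥ ∏_{i<k} minLocalRho p_i = ρ(2 n_k)`. Finally `log log` is increasing, and nonnegative
from `e` on.
-/

open Filter Finset Real

/-- The number of primitive Dirichlet characters modulo `n`. -/
noncomputable def numPrim (n : ℕ) : ℕ :=
  Nat.card {χ : DirichletCharacter ℂ n // χ.IsPrimitive}

/-- The proportion of Dirichlet characters mod `n` that are primitive. -/
noncomputable def rho (n : ℕ) : ℝ := (numPrim n : ℝ) / (Nat.totient n : ℝ)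

/-- The product of the first `k` primes. -/
noncomputable def nthPrimorial (k : ℕ) : ℕ := ∏ i ∈ Finset.range k, Nat.nth Nat.Prime i

/-- The twin prime constant `C₂ = ∏_{p > 2} p(p-2)/(p-1)²`. -/
noncomputable def twinPrimeConst : ℝ :=
  ∏' p : {p : ℕ // p.Prime ∧ 2 < p},
    (((p : ℕ) : ℝ) * (((p : ℕ) : ℝ) - 2) / (((p : ℕ) : ℝ) - 1) ^ 2)

/-- Chebyshev's theta function `ϑ(x) = ∑_{p ≤ x} log p`. -/
noncomputable def theta (x : ℝ) : ℝ :=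
  ∑ p ∈ Nat.primesBelow (⌊x⌋₊ + 1), Real.log p

/-- The function `f` of Nicolas. -/
noncomputable def ffun (x : ℝ) : ℝ :=
  Real.exp Real.eulerMascheroniConstant * Real.log (theta x) *
    ∏ p ∈ Nat.primesBelow (⌊x⌋₊ + 1), (1 - 1 / (p : ℝ))

/-- The modified function `g`. -/
noncomputable def gfun (x : ℝ) : ℝ :=
  Real.exp Real.eulerMascheroniConstant * Real.log (theta x + Real.log 2) *
    (∏ p ∈ Nat.primesBelow (⌊x⌋₊ + 1), (1 - 1 / (p : ℝ))) *
    ∏' p : {p : ℕ // p.Prime ∧ x < (p : ℝ)},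
      (1 + 1 / (((p : ℕ) : ℝ) * (((p : ℕ) : ℝ) - 2)))

namespace Nat

theorem prod_range_card_nth_le_prod {R : Type*} [CommSemiring R] [PartialOrder R]
    [IsOrderedRing R] {P : ℕ → Prop} (hP : (Set.ofPred P).Infinite) {f : ℕ → R}
    (hf : MonotoneOn f (Set.ofPred P)) (hf₀ : ∀ x, P x → 0 ≤ f x) (s : Finset ℕ)
    (hs : ∀ x ∈ s, P x) :
    ∏ i ∈ range #s, f (nth P i) ≤ ∏ x ∈ s, f x := by
  classical
  induction s using Finset.induction_on_max with
  | empty => simp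
  | insert a s has_lt ih =>
    have ha : a ∉ s := fun h => (has_lt a h).false
    have hPs : ∀ x ∈ s, P x := fun x hx => hs x (mem_insert_of_mem hx)
    have hnth : nth P #s ≤ a := by
      have hcount : #s < count P (a + 1) := by
        rw [count_eq_card_filter_range, Nat.lt_iff_add_one_le, ← card_insert_of_notMem ha]
        refine card_le_card fun x hx => mem_filter.mpr ⟨?_, hs x hx⟩
        rcases mem_insert.mp hx with rfl | hx
        · exact self_mem_range_succ x
        · exact mem_range.mpr (by have := has_lt x hx; omega)
      exact Nat.le_of_lt_succ (nth_lt_of_lt_count hcount)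
    rw [card_insert_of_notMem ha, prod_range_succ, prod_insert ha, mul_comm (f a)]
    exact mul_le_mul (ih hPs) (hf (nth_mem_of_infinite hP _) (hs a (mem_insert_self a s)) hnth)
      (hf₀ _ (nth_mem_of_infinite hP _)) (prod_nonneg fun x hx => hf₀ x (hPs x hx))

end Nat

open DirichletCharacter in
theorem totient_eq_sum_numPrim {n : ℕ} (hn : n ≠ 0) :
    n.totient = ∑ d ∈ n.divisors, numPrim d := by
  have : NeZero n := ⟨hn⟩
  let lift : (Σ d : n.divisors, {ψ : DirichletCharacter ℂ d // ψ.IsPrimitive}) →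
      DirichletCharacter ℂ n := fun x => changeLevel (Nat.dvd_of_mem_divisors x.1.2) x.2.1
  have hlift : Function.Bijective lift := by
    constructor
    · rintro ⟨⟨d₁, hd₁⟩, ψ₁, hψ₁⟩ ⟨⟨d₂, hd₂⟩, ψ₂, hψ₂⟩ h
      obtain rfl : d₁ = d₂ := calc
        d₁ = (changeLevel (Nat.dvd_of_mem_divisors hd₁) ψ₁).conductor :=
          hψ₁.symm.trans (conductor_changeLevel ψ₁ _).symm
        _ = d₂ := (congrArg conductor h).trans ((conductor_changeLevel ψ₂ _).trans hψ₂)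
      obtain rfl : ψ₁ = ψ₂ := changeLevel_injective _ h
      rfl
    · intro χ
      have hχ : χ.conductor ∈ n.divisors :=
        Nat.mem_divisors.mpr ⟨χ.conductor_dvd_level, hn⟩
      exact ⟨⟨⟨_, hχ⟩, χ.primitiveCharacter, χ.primitiveCharacter_isPrimitive⟩,
        χ.changeLevel_primitiveCharacter⟩
  rw [← card_eq_totient_of_hasEnoughRootsOfUnity ℂ n,
    ← Nat.card_congr (Equiv.ofBijective _ hlift), Nat.card_sigma]
  exact Finset.sum_coe_sort n.divisors numPrim

namespace ArithmeticFunction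

def totient : ArithmeticFunction ℕ := ⟨Nat.totient, Nat.totient_zero⟩

@[simp]
theorem totient_apply (n : ℕ) : totient n = n.totient := rfl

theorem isMultiplicative_totient : totient.IsMultiplicative :=
  ⟨Nat.totient_one, Nat.totient_mul⟩

end ArithmeticFunction

open ArithmeticFunction in
theorem numPrim_eq_moebius_mul_totient {n : ℕ} (hn : 0 < n) :
    (numPrim n : ℤ) = (moebius * (totient : ArithmeticFunction ℤ)) n := by
  have hsum : ∀ m > 0, ∑ d ∈ m.divisors, (numPrim d : ℤ) = m.totient := fun m hm => by
    exact_mod_cast (totient_eq_sum_numPrim hm.ne').symm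
  rw [← sum_eq_iff_sum_smul_moebius_eq.mp hsum n hn, mul_apply]
  simp

theorem numPrim_eq_prod_primeFactors {n : ℕ} (hn : n ≠ 0) :
    numPrim n = ∏ p ∈ n.primeFactors, numPrim (p ^ n.factorization p) := by
  have hmult := ArithmeticFunction.isMultiplicative_moebius.mul
    ArithmeticFunction.isMultiplicative_totient.natCast (R := ℤ)
  apply Nat.cast_injective (R := ℤ)
  rw [numPrim_eq_moebius_mul_totient (Nat.pos_of_ne_zero hn),
    hmult.multiplicative_factorization _ hn, Finsupp.prod, Nat.support_factorization,
    Nat.cast_prod]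
  refine Finset.prod_congr rfl fun p hp => (numPrim_eq_moebius_mul_totient ?_).symm
  exact pow_pos (Nat.pos_of_mem_primeFactors hp) _

theorem rho_eq_prod_primeFactors {n : ℕ} (hn : n ≠ 0) :
    rho n = ∏ p ∈ n.primeFactors, rho (p ^ n.factorization p) := by
  have htot : n.totient = ∏ p ∈ n.primeFactors, (p ^ n.factorization p).totient := by
    rw [Nat.multiplicative_factorization _ (fun _ _ => Nat.totient_mul) Nat.totient_one hn,
      Finsupp.prod, Nat.support_factorization]
  simp only [rho]
  rw [numPrim_eq_prod_primeFactors hn, htot]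
  push_cast
  exact (prod_div_distrib ..).symm

theorem numPrim_prime_pow_succ_add_totient {p : ℕ} (hp : p.Prime) (a : ℕ) :
    numPrim (p ^ (a + 1)) + (p ^ a).totient = (p ^ (a + 1)).totient := by
  rw [totient_eq_sum_numPrim (pow_ne_zero _ hp.ne_zero),
    totient_eq_sum_numPrim (pow_ne_zero _ hp.ne_zero), Nat.sum_divisors_prime_pow hp,
    Nat.sum_divisors_prime_pow hp, Finset.sum_range_succ _ (a + 1), add_comm]

theorem rho_prime_pow_succ {p : ℕ} (hp : p.Prime) (a : ℕ) :
    rho (p ^ (a + 1)) = 1 - ((p ^ a).totient : ℝ) / (p ^ (a + 1)).totient := by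
  have htot : ((p ^ (a + 1)).totient : ℝ) ≠ 0 := by
    exact_mod_cast (Nat.totient_pos.mpr (pow_pos hp.pos _)).ne'
  rw [rho, eq_sub_iff_add_eq, ← add_div, div_eq_one_iff_eq htot]
  exact_mod_cast numPrim_prime_pow_succ_add_totient hp a

theorem rho_prime {p : ℕ} (hp : p.Prime) : rho p = 1 - 1 / ((p : ℝ) - 1) := by
  simpa [Nat.totient_prime hp, Nat.cast_sub hp.one_le] using rho_prime_pow_succ hp 0

theorem rho_prime_pow {p a : ℕ} (hp : p.Prime) (ha : 2 ≤ a) :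
    rho (p ^ a) = 1 - 1 / (p : ℝ) := by
  obtain ⟨b, rfl⟩ := Nat.exists_eq_add_of_le' ha
  have hp0 : (p : ℝ) ≠ 0 := by exact_mod_cast hp.ne_zero
  have hp1 : (p : ℝ) - 1 ≠ 0 := sub_ne_zero.mpr (by exact_mod_cast hp.one_lt.ne')
  rw [rho_prime_pow_succ hp, Nat.totient_prime_pow_succ hp, Nat.totient_prime_pow_succ hp]
  push_cast [Nat.cast_sub hp.one_le]
  field_simp
  ring

/-- The least value of `rho (p ^ a)` over the exponents `a ≥ 1` allowed in an `n` with
`n % 4 ≠ 2`: `1 - 1/(p-1)` for odd `p` (at `a = 1`) and `1/2` for `p = 2` (at `a ≥ 2`). -/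
noncomputable def minLocalRho (p : ℕ) : ℝ := 1 - 1 / max ((p : ℝ) - 1) 2

theorem monotone_minLocalRho : Monotone minLocalRho := fun p q hpq => by
  unfold minLocalRho
  gcongr

theorem minLocalRho_nonneg (p : ℕ) : 0 ≤ minLocalRho p := by
  rw [minLocalRho, sub_nonneg, div_le_one (by positivity)]
  exact (le_max_right _ _).trans' one_le_two

theorem minLocalRho_two : minLocalRho 2 = rho (2 ^ 2) := by
  rw [rho_prime_pow Nat.prime_two le_rfl, minLocalRho]
  norm_num

theorem minLocalRho_eq_rho_of_ne_two {p : ℕ} (hp : p.Prime) (hp2 : p ≠ 2) :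
    minLocalRho p = rho p := by
  have hp3 : (3 : ℝ) ≤ p := by exact_mod_cast hp.two_le.lt_of_ne' hp2
  rw [rho_prime hp, minLocalRho, max_eq_left (by linarith)]

theorem minLocalRho_le_rho_prime_pow {p a : ℕ} (hp : p.Prime) (ha : a ≠ 0)
    (hp2 : p = 2 → 2 ≤ a) : minLocalRho p ≤ rho (p ^ a) := by
  rcases (Nat.one_le_iff_ne_zero.mpr ha).eq_or_lt with rfl | ha2
  · rw [pow_one, minLocalRho_eq_rho_of_ne_two hp fun h => absurd (hp2 h) (by norm_num)]
  · have hp2' : (2 : ℝ) ≤ p := by exact_mod_cast hp.two_le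
    rw [rho_prime_pow hp ha2, minLocalRho]
    gcongr
    exact max_le (by linarith) hp2'

theorem prod_minLocalRho_le_rho {n : ℕ} (hn : n ≠ 0) (hn4 : n % 4 ≠ 2) :
    ∏ p ∈ n.primeFactors, minLocalRho p ≤ rho n := by
  rw [rho_eq_prod_primeFactors hn]
  refine prod_le_prod (fun p _ => minLocalRho_nonneg p) fun p hp => ?_
  have hpn := Nat.dvd_of_mem_primeFactors hp
  have hp := Nat.prime_of_mem_primeFactors hp
  refine minLocalRho_le_rho_prime_pow hp (hp.factorization_pos_of_dvd hn hpn).ne' fun hp2 => ?_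
  subst hp2
  rw [← Nat.prime_two.pow_dvd_iff_le_factorization hn]
  omega

theorem nthPrimorial_eq_prod_image (k : ℕ) :
    nthPrimorial k = ∏ p ∈ (range k).image (Nat.nth Nat.Prime), p := by
  rw [prod_image fun _ _ _ _ h => Nat.nth_injective Nat.infinite_setOfPred_prime h]
  rfl

theorem prime_of_mem_image_nth_prime {k p : ℕ} (hp : p ∈ (range k).image (Nat.nth Nat.Prime)) :
    p.Prime := by
  obtain ⟨i, -, rfl⟩ := mem_image.mp hp
  exact Nat.prime_nth_prime i

theorem primeFactors_nthPrimorial (k : ℕ) :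
    (nthPrimorial k).primeFactors = (range k).image (Nat.nth Nat.Prime) := by
  rw [nthPrimorial_eq_prod_image, Nat.primeFactors_prod fun _ => prime_of_mem_image_nth_prime]

theorem squarefree_nthPrimorial (k : ℕ) : Squarefree (nthPrimorial k) := by
  rw [nthPrimorial_eq_prod_image]
  refine squarefree_prod_of_pairwise_isCoprime (fun p hp q hq hpq => ?_)
    fun p hp => (prime_of_mem_image_nth_prime hp).prime.squarefree
  rw [Function.onFun, ← Nat.coprime_iff_isRelPrime]
  exact (Nat.coprime_primes (prime_of_mem_image_nth_prime hp)
    (prime_of_mem_image_nth_prime hq)).mpr hpq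

theorem two_mem_primeFactors_nthPrimorial {k : ℕ} (hk : k ≠ 0) :
    2 ∈ (nthPrimorial k).primeFactors := by
  rw [primeFactors_nthPrimorial, ← Nat.nth_prime_zero_eq_two]
  exact mem_image_of_mem _ (mem_range.mpr (Nat.pos_of_ne_zero hk))

theorem rho_two_mul_nthPrimorial {k : ℕ} (hk : k ≠ 0) :
    rho (2 * nthPrimorial k) = ∏ i ∈ range k, minLocalRho (Nat.nth Nat.Prime i) := by
  have hk₀ : nthPrimorial k ≠ 0 := (squarefree_nthPrimorial k).ne_zero
  have h2 := two_mem_primeFactors_nthPrimorial hk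
  have hfactors : (2 * nthPrimorial k).primeFactors = (nthPrimorial k).primeFactors := by
    rw [Nat.primeFactors_mul two_ne_zero hk₀, Nat.prime_two.primeFactors, singleton_union,
      insert_eq_of_mem h2]
  rw [rho_eq_prod_primeFactors (mul_ne_zero two_ne_zero hk₀), hfactors]
  calc ∏ p ∈ (nthPrimorial k).primeFactors, rho (p ^ (2 * nthPrimorial k).factorization p)
      = ∏ p ∈ (nthPrimorial k).primeFactors, minLocalRho p := by
        refine prod_congr rfl fun p hp => ?_
        have hp' := Nat.prime_of_mem_primeFactors hp
        rw [Nat.factorization_mul two_ne_zero hk₀, Finsupp.add_apply, Nat.prime_two.factorization,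
          Nat.factorization_eq_one_of_squarefree (squarefree_nthPrimorial k) hp'
            (Nat.dvd_of_mem_primeFactors hp), Finsupp.single_apply]
        rcases eq_or_ne p 2 with rfl | hp2
        · rw [if_pos rfl, minLocalRho_two]
        · rw [if_neg (Ne.symm hp2), zero_add, pow_one, minLocalRho_eq_rho_of_ne_two hp' hp2]
    _ = ∏ i ∈ range k, minLocalRho (Nat.nth Nat.Prime i) := by
        rw [primeFactors_nthPrimorial,
          prod_image fun _ _ _ _ h => Nat.nth_injective Nat.infinite_setOfPred_prime h]

theorem rho_loglog_ineq_general (k : ℕ) (n : ℕ)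
    (hge : 2 * nthPrimorial k ≤ n) (hn4 : n % 4 ≠ 2)
    (homega : n.primeFactors.card = k) :
    rho (2 * nthPrimorial k) * Real.log (Real.log (2 * nthPrimorial k)) ≤
      rho n * Real.log (Real.log n) := by
  have hk : k ≠ 0 := by
    rintro rfl
    rcases Nat.primeFactors_eq_empty.mp (card_eq_zero.mp homega) with rfl | rfl <;>
      simp [nthPrimorial] at hge
  have h2 : 2 ≤ nthPrimorial k :=
    Nat.le_of_dvd (Nat.pos_of_ne_zero (squarefree_nthPrimorial k).ne_zero)
      (Nat.dvd_of_mem_primeFactors (two_mem_primeFactors_nthPrimorial hk))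
  have hM : (4 : ℝ) ≤ 2 * nthPrimorial k := by norm_cast; omega
  have hMn : (2 * nthPrimorial k : ℝ) ≤ n := by exact_mod_cast hge
  have hrho : rho (2 * nthPrimorial k) ≤ rho n := calc
    rho (2 * nthPrimorial k) = ∏ i ∈ range k, minLocalRho (Nat.nth Nat.Prime i) :=
      rho_two_mul_nthPrimorial hk
    _ ≤ ∏ p ∈ n.primeFactors, minLocalRho p := homega ▸
      Nat.prod_range_card_nth_le_prod Nat.infinite_setOfPred_prime
        (monotone_minLocalRho.monotoneOn _) (fun p _ => minLocalRho_nonneg p) _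
        fun _ => Nat.prime_of_mem_primeFactors
    _ ≤ rho n := prod_minLocalRho_le_rho (by omega) hn4
  have hlogM : 1 ≤ Real.log (2 * nthPrimorial k) := by
    rw [Real.le_log_iff_exp_le (by linarith)]
    linarith [Real.exp_one_lt_d9]
  refine mul_le_mul hrho ?_ (Real.log_nonneg hlogM) (by unfold rho; positivity)
  exact Real.log_le_log (by linarith) (Real.log_le_log (by linarith) hMn)

theorem rho_loglog_ineq (k : ℕ) (hk : 1 < k) (n : ℕ)
    (hge : 2 * nthPrimorial k ≤ n) (hn4 : n % 4 ≠ 2)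
    (homega : n.primeFactors.card = k) :
    rho (2 * nthPrimorial k) * Real.log (Real.log (2 * nthPrimorial k)) ≤
      rho n * Real.log (Real.log n) :=
  rho_loglog_ineq_general k n hge hn4 homega
end

section
/- Assume the Riemann hypothesis, and assume the bounds log f(x) ≤ -0.8/(√x · log x) for x ≥ 3000 (where f(x) = e^γ log ϑ(x) ∏_{p ≤ x}(1 - 1/p)) and ϑ(x) ≥ 4x/5 for x ≥ 121. Then log g(x) ≤ -0.6/(√x · log x) for all x ≥ 3000, where g(x) = e^γ log(ϑ(x) + log 2) ∏_{p ≤ x}(1 - 1/p) ∏_{p > x}(1 + 1/(p(p-2))). -/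
open Filter Finset Real

/-!
Since `g(x) = f(x) · log(ϑ(x) + log 2) / log ϑ(x) · ∏_{p > x} (1 + 1/(p(p-2)))`, the bound for
`log f` leaves a margin of `0.2/(√x log x)` to absorb two error terms. The log-log ratio is at most
`log 2/(ϑ(x) log ϑ(x)) ≤ 0.22/x` by concavity of `log` and `ϑ(x) ≥ 4x/5`. The log of the tail
product is at most `∑_{p > x} 1/(p(p-2)) ≤ 1/(x-2)`, by `1 + t ≤ eᵗ` and the telescoping bound
`1/(n(n-2)) ≤ 1/(n-2) - 1/(n-1)`. Both are `O(1/x)`, and `√x log x ≤ 0.16 x` for `x ≥ 3000`.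
-/

namespace Real

lemma one_le_tprod_one_add {ι : Type*} {f : ι → ℝ} (hf : ∀ i, 0 ≤ f i) :
    1 ≤ ∏' i, (1 + f i) := by
  by_cases hm : Multipliable fun i ↦ 1 + f i
  · refine ge_of_tendsto' hm.hasProd fun s ↦ ?_
    exact Finset.one_le_prod fun i _ ↦ le_add_of_nonneg_right (hf i)
  · rw [tprod_eq_one_of_not_multipliable hm]

lemma tprod_one_add_le_exp {ι : Type*} {f : ι → ℝ} {B : ℝ} (hf : ∀ i, 0 ≤ f i)
    (hB : ∀ s : Finset ι, ∑ i ∈ s, f i ≤ B) : ∏' i, (1 + f i) ≤ exp B := by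
  by_cases hm : Multipliable fun i ↦ 1 + f i
  · exact le_of_tendsto' hm.hasProd fun s ↦
      (prod_one_add_le_exp_sum s hf).trans (exp_le_exp.2 (hB s))
  · rw [tprod_eq_one_of_not_multipliable hm]
    exact one_le_exp (by simpa using hB ∅)

lemma log_sub_log_le_div {a b : ℝ} (ha : 0 < a) (hb : 0 < b) :
    log a - log b ≤ (a - b) / b := by
  rw [← log_div ha.ne' hb.ne']
  calc log (a / b) ≤ a / b - 1 := log_le_sub_one_of_pos (div_pos ha hb)
    _ = (a - b) / b := by field_simp

lemma log_log_add_sub_log_log_le {T c : ℝ} (hT : 1 < T) (hc : 0 ≤ c) :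
    log (log (T + c)) - log (log T) ≤ c / (T * log T) := by
  have hlogT : 0 < log T := log_pos hT
  calc log (log (T + c)) - log (log T) ≤ (log (T + c) - log T) / log T :=
        log_sub_log_le_div (log_pos (by linarith)) hlogT
    _ ≤ ((T + c - T) / T) / log T := by
        gcongr
        exact log_sub_log_le_div (by linarith) (by linarith)
    _ = c / (T * log T) := by rw [add_sub_cancel_left, div_div]

lemma log_le_mul_sqrt_of_ge {x : ℝ} (hx : 3000 ≤ x) : log x ≤ 0.16 * √x := by
  have hexp : exp 2 ≤ 3000 :=
    ((exp_le_exp.2 (by norm_num)).trans Behrend.exp_four_lt.le).trans (by norm_num)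
  have hratio : log x / √x ≤ log 3000 / √3000 :=
    log_div_sqrt_antitoneOn hexp (hexp.trans hx) hx
  have hlog : log 3000 ≤ 12 * 0.6931471808 :=
    calc log 3000 ≤ log (2 ^ 12) := log_le_log (by norm_num) (by norm_num)
      _ = 12 * log 2 := by rw [log_pow]; norm_num
      _ ≤ 12 * 0.6931471808 := by linarith [log_two_lt_d9]
  have hsqrt : 54.7 ≤ √3000 := le_sqrt_of_sq_le (by norm_num)
  rw [div_le_iff₀ (sqrt_pos.2 (by linarith))] at hratio
  rw [div_mul_eq_mul_div, le_div_iff₀ (by positivity)] at hratio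
  nlinarith [sqrt_nonneg x]

end Real

lemma sum_one_div_mul_sub_two_le {N : ℕ} (hN : 3 ≤ N) {s : Finset ℕ} (hs : ∀ n ∈ s, N ≤ n) :
    ∑ n ∈ s, 1 / ((n : ℝ) * (n - 2)) ≤ 1 / ((N : ℝ) - 2) := by
  set g : ℕ → ℝ := fun n ↦ -1 / ((n : ℝ) - 2)
  have hstep : ∀ n : ℕ, 3 ≤ n → 1 / ((n : ℝ) * (n - 2)) ≤ g (n + 1) - g n := by
    intro n hn
    have hn' : (3 : ℝ) ≤ n := by exact_mod_cast hn
    have hdiff : g (n + 1) - g n = 1 / (((n : ℝ) - 2) * (n - 1)) := by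
      have h1 : (n : ℝ) - 2 ≠ 0 := by linarith
      have h2 : (n : ℝ) - 1 ≠ 0 := by linarith
      simp only [g]
      rw [Nat.cast_succ, show (n : ℝ) + 1 - 2 = n - 1 by ring]
      field_simp
      ring
    rw [hdiff]
    exact one_div_le_one_div_of_le (by nlinarith) (by nlinarith)
  set M := N + s.sup id + 1
  have hsub : s ⊆ Ico N M := fun n hn ↦
    mem_Ico.2 ⟨hs n hn, by have := le_sup (f := id) hn; simp only [id] at this; omega⟩
  calc ∑ n ∈ s, 1 / ((n : ℝ) * (n - 2))
      ≤ ∑ n ∈ Ico N M, 1 / ((n : ℝ) * (n - 2)) :=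
        sum_le_sum_of_subset_of_nonneg hsub fun n hn _ ↦ by
          have : (3 : ℝ) ≤ n := by exact_mod_cast hN.trans (mem_Ico.1 hn).1
          exact one_div_nonneg.2 (mul_nonneg (by linarith) (by linarith))
    _ ≤ ∑ n ∈ Ico N M, (g (n + 1) - g n) :=
        sum_le_sum fun n hn ↦ hstep n (hN.trans (mem_Ico.1 hn).1)
    _ = g M - g N := sum_Ico_sub g (by omega)
    _ ≤ 1 / ((N : ℝ) - 2) := by
        have hM : (3 : ℝ) ≤ M := by exact_mod_cast (show 3 ≤ M by omega)
        have : 0 ≤ 1 / ((M : ℝ) - 2) := one_div_nonneg.2 (by linarith)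
        simp only [g, neg_div]
        linarith

noncomputable def primeTailProd (x : ℝ) : ℝ :=
  ∏' p : {p : ℕ // p.Prime ∧ x < (p : ℝ)}, (1 + 1 / (((p : ℕ) : ℝ) * (((p : ℕ) : ℝ) - 2)))

lemma sum_prime_tail_le {x : ℝ} (hx : 2 < x) (s : Finset {p : ℕ // p.Prime ∧ x < (p : ℝ)}) :
    ∑ p ∈ s, 1 / (((p : ℕ) : ℝ) * (((p : ℕ) : ℝ) - 2)) ≤ 1 / (x - 2) := by
  have hfloor : 2 ≤ ⌊x⌋₊ := Nat.le_floor (by exact_mod_cast hx.le)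
  have hbound := sum_one_div_mul_sub_two_le (N := ⌊x⌋₊ + 1) (by omega)
    (s := s.map (Function.Embedding.subtype _)) (by
      simp only [Finset.mem_map, Function.Embedding.subtype_apply]
      rintro _ ⟨p, -, rfl⟩
      exact (Nat.floor_lt (by linarith)).2 p.2.2)
  rw [sum_map] at hbound
  refine hbound.trans (one_div_le_one_div_of_le (by linarith) ?_)
  push_cast
  linarith [Nat.lt_floor_add_one x]

lemma one_div_mul_sub_two_nonneg {p : ℕ} (hp : p.Prime) : 0 ≤ 1 / ((p : ℝ) * (p - 2)) := by
  have : (2 : ℝ) ≤ p := by exact_mod_cast hp.two_le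
  exact one_div_nonneg.2 (mul_nonneg (by linarith) (by linarith))

lemma one_le_primeTailProd (x : ℝ) : 1 ≤ primeTailProd x :=
  one_le_tprod_one_add fun p ↦ one_div_mul_sub_two_nonneg p.2.1

lemma log_primeTailProd_le {x : ℝ} (hx : 2 < x) : log (primeTailProd x) ≤ 1 / (x - 2) := by
  rw [log_le_iff_le_exp (by linarith [one_le_primeTailProd x])]
  exact tprod_one_add_le_exp (fun p ↦ one_div_mul_sub_two_nonneg p.2.1) (sum_prime_tail_le hx)

lemma prod_primesBelow_one_sub_inv_pos (n : ℕ) :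
    0 < ∏ p ∈ Nat.primesBelow n, (1 - 1 / (p : ℝ)) :=
  prod_pos fun p hp ↦ by
    have : (2 : ℝ) ≤ p := by exact_mod_cast (Nat.prime_of_mem_primesBelow hp).two_le
    rw [sub_pos, div_lt_one (by linarith)]
    linarith

lemma log_gfun_eq {x : ℝ} (hx : 1 < theta x) :
    log (gfun x) = log (ffun x) + (log (log (theta x + log 2)) - log (log (theta x))) +
      log (primeTailProd x) := by
  have hL : 0 < log (theta x) := log_pos hx
  have hL' : 0 < log (theta x + log 2) := log_pos (by linarith [log_pos one_lt_two])
  have hQ := prod_primesBelow_one_sub_inv_pos (⌊x⌋₊ + 1)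
  have hP : 0 < primeTailProd x := zero_lt_one.trans_le (one_le_primeTailProd x)
  have hγ := exp_pos eulerMascheroniConstant
  change log (_ * _ * _ * primeTailProd x) = log (_ * _ * _) + _ + _
  rw [log_mul (by positivity) hP.ne', log_mul (by positivity) hQ.ne', log_mul hγ.ne' hL'.ne',
    log_mul (by positivity) hQ.ne', log_mul hγ.ne' hL.ne']
  ring

lemma error_terms_le {x T : ℝ} (hx : 3000 ≤ x) (hT : 4 * x / 5 ≤ T) :
    log 2 / (T * log T) + 1 / (x - 2) ≤ 0.2 / (√x * log x) := by
  have hlogT : 4 ≤ log T := by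
    rw [le_log_iff_exp_le (by linarith)]
    linarith [Behrend.exp_four_lt]
  have hS : 0 < √x * log x := mul_pos (sqrt_pos.2 (by linarith)) (log_pos (by linarith))
  have hSx : √x * log x ≤ 0.16 * x := by
    calc √x * log x ≤ √x * (0.16 * √x) :=
          mul_le_mul_of_nonneg_left (log_le_mul_sqrt_of_ge hx) (sqrt_nonneg x)
      _ = 0.16 * x := by rw [mul_left_comm, mul_self_sqrt (by linarith)]
  have hratio : log 2 / (T * log T) ≤ 0.7 / (3.2 * x) :=
    div_le_div₀ (by norm_num) (by linarith [log_two_lt_d9]) (by positivity) (by nlinarith)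
  have htail : 1 / (x - 2) ≤ 1.001 / x := by
    rw [div_le_div_iff₀ (by linarith) (by linarith)]
    linarith
  have hmargin : 0.7 / (3.2 * x) + 1.001 / x ≤ 0.2 / (√x * log x) := by
    rw [div_add_div _ _ (by positivity) (by positivity), div_le_div_iff₀ (by positivity) hS]
    nlinarith
  linarith

theorem log_g_upper_bound_general
    (hf : ∀ x : ℝ, 3000 ≤ x →
      Real.log (ffun x) ≤ -0.8 / (Real.sqrt x * Real.log x))
    (htheta : ∀ x : ℝ, 121 ≤ x → 4 * x / 5 ≤ theta x) :
    ∀ x : ℝ, 3000 ≤ x →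
      Real.log (gfun x) ≤ -0.6 / (Real.sqrt x * Real.log x) := by
  intro x hx
  have hθ : 4 * x / 5 ≤ theta x := htheta x (by linarith)
  rw [log_gfun_eq (by linarith)]
  have hloglog := log_log_add_sub_log_log_le (c := log 2) (show 1 < theta x by linarith)
    (log_nonneg one_le_two)
  have htail := log_primeTailProd_le (show 2 < x by linarith)
  have herror := error_terms_le hx hθ
  have hmargin : -0.8 / (√x * log x) + 0.2 / (√x * log x) = -0.6 / (√x * log x) := by ring
  linarith [hf x hx]

theorem log_g_upper_bound (hRH : RiemannHypothesis)
    (hf : ∀ x : ℝ, 3000 ≤ x →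
      Real.log (ffun x) ≤ -0.8 / (Real.sqrt x * Real.log x))
    (htheta : ∀ x : ℝ, 121 ≤ x → 4 * x / 5 ≤ theta x) :
    ∀ x : ℝ, 3000 ≤ x →
      Real.log (gfun x) ≤ -0.6 / (Real.sqrt x * Real.log x) :=
  log_g_upper_bound_general hf htheta
end
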